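/- Let φ ∈ (−π, π], set w = e^{iφ}, and let s be a real number with |s| < 2/√3. Then the series S(s) = Σ_{n=1}^∞ (i^n/n!) · [Γ(3n/2 − 1)/Γ(n/2)] · 3^{1−n} · e^{iφ(1/2 − 3n/4)} · s^n converges absolutely (and the convergence is uniform on |s| ≤ r for every r < 2/√3), and the complex number α = −e^{iφ/2} + S(s) satisfies the cubic equation w·α − α³/3 = −(2/3)·e^{i·3φ/2} − s². -/

import Mathlib

/-!
Put `b = i s w^{-1/4}` and `z = i s w^{-3/4} / 3`. Then `S(s) = b σ` with `σ = Σ R(n) zⁿ`, where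
`R(n) = (n+1)!⁻¹ Γ(3n/2 + 1/2) / Γ(n/2 + 1/2)` is the Raney number with parameters `(3/2, 1/2)`,
the coefficient of `zⁿ` in `B(z)^{1/2}` for the generalised binomial series `B = 1 + z B^{3/2}`.
The Rothe–Hagen convolution identity for Raney numbers (both sides are polynomials in the second
exponent whose difference is `1`-periodic and vanishes at `0`) makes the exponent additive under
Cauchy products, so `σ² = B` and `σ³ = B^{3/2}`; the shift `R(1; n+1) = R(3/2; n)` turns
`B = 1 + z B^{3/2}` into `σ² = 1 + z σ³`, which is the cubic for `α = -w^{1/2} + b σ`.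
Convergence for `|s| < 2/√3`, i.e. `27 |z|² < 4`, follows from `R(n+2) ≤ (27/4) R(n)`.
-/

open Complex Filter

/-- The `n`-th term of the series `S(s)` from Lemma 1 (series inversion around the
saddle point `-w^{1/2}`), with `w = e^{iφ}`. -/
noncomputable def saddleTerm (φ : ℝ) (n : ℕ) (s : ℝ) : ℂ :=
  Complex.I ^ n / (n.factorial : ℂ) *
    ((Real.Gamma (3 * n / 2 - 1) / Real.Gamma (n / 2) : ℝ) : ℂ) *
    (3 : ℂ) ^ (1 - (n : ℤ)) *
    Complex.exp (Complex.I * φ * (1 / 2 - 3 * n / 4)) * (s : ℂ) ^ n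

open Polynomial Finset

theorem Polynomial.eq_C_of_periodic {R : Type*} [CommRing R] [IsDomain R] [CharZero R]
    {q : R[X]} (h : Function.Periodic q.eval 1) : q = C (q.eval 0) := by
  rw [← sub_eq_zero]
  refine eq_zero_of_infinite_isRoot _ (Set.infinite_of_injective_forall_mem
    (f := fun m : ℕ => (m : R)) Nat.cast_injective fun m => ?_)
  simpa [sub_eq_zero] using h.nat_mul_eq m

theorem Real.Gamma_add_nat_eq_mul_prod {x : ℝ} (hx : 0 < x) (n : ℕ) :
    Real.Gamma (x + n) = Real.Gamma x * ∏ i ∈ range n, (x + i) := by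
  induction n with
  | zero => simp
  | succ n ih =>
    rw [Nat.cast_succ, ← add_assoc, Real.Gamma_add_one (by positivity), ih, prod_range_succ]
    ring

-- The Raney numbers `raney p n r = r / (p n + r) * choose (p n + r) n`, as polynomials in `r`.
noncomputable def raneyPoly (p : ℝ) : ℕ → ℝ[X]
  | 0 => 1
  | n + 1 => C ((n + 1).factorial : ℝ)⁻¹ * (X * ∏ i ∈ range n, (X + C ((p - 1) * (n + 1) + 1 + i)))

noncomputable def raney (p : ℝ) (n : ℕ) (x : ℝ) : ℝ := (raneyPoly p n).eval x

@[simp] theorem raney_zero (p x : ℝ) : raney p 0 x = 1 := by simp [raney, raneyPoly]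

theorem raney_succ (p x : ℝ) (n : ℕ) :
    raney p (n + 1) x =
      x * (∏ i ∈ range n, (x + (p - 1) * (n + 1) + 1 + i)) / (n + 1).factorial := by
  simp only [raney, raneyPoly, eval_mul, eval_C, eval_X, eval_prod, eval_add, add_assoc]
  ring

@[simp] theorem raney_succ_zero (p : ℝ) (n : ℕ) : raney p (n + 1) 0 = 0 := by
  simp [raney_succ]

theorem raney_succ_add_one_sub (p x : ℝ) (n : ℕ) :
    raney p (n + 1) (x + 1) - raney p (n + 1) x = raney p n (x + p) := by
  rcases n with _ | m
  · simp [raney_succ]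
  set Q := ∏ i ∈ range m, (x + p + (p - 1) * (m + 1) + 1 + i)
  have h₁ : raney p (m + 2) (x + 1) = (x + 1) * (Q * (x + p * (m + 2))) / (m + 2).factorial := by
    rw [raney_succ, prod_range_succ]
    congr 3
    · exact prod_congr rfl fun i _ => by push_cast; ring
    · push_cast; ring
  have h₂ : raney p (m + 2) x = x * (Q * (x + (p - 1) * (m + 2) + 1)) / (m + 2).factorial := by
    rw [raney_succ, prod_range_succ']
    congr 3
    · exact prod_congr rfl fun i _ => by push_cast; ring
    · push_cast; ring
  have h₃ : raney p (m + 1) (x + p) = (x + p) * Q / (m + 1).factorial := raney_succ p (x + p) m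
  rw [h₁, h₂, h₃, Nat.factorial_succ (m + 1)]
  push_cast
  field_simp
  ring

theorem raney_succ_one (p : ℝ) (n : ℕ) : raney p (n + 1) 1 = raney p n p := by
  rcases n with _ | m
  · simp [raney_succ]
  rw [raney_succ, raney_succ, prod_range_succ, Nat.factorial_succ (m + 1)]
  have : ∏ i ∈ range m, (1 + (p - 1) * ((m + 1 : ℕ) + 1) + 1 + i) =
      ∏ i ∈ range m, (p + (p - 1) * (m + 1) + 1 + i) :=
    prod_congr rfl fun i _ => by push_cast; ring
  rw [this]
  push_cast
  field_simp
  ring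

theorem sum_antidiagonal_raney_mul (p r s : ℝ) (n : ℕ) :
    ∑ ij ∈ antidiagonal n, raney p ij.1 r * raney p ij.2 s = raney p n (r + s) := by
  induction n generalizing s with
  | zero => simp
  | succ n ih =>
    set q : ℝ[X] := ∑ ij ∈ antidiagonal (n + 1), C (raney p ij.1 r) * raneyPoly p ij.2 -
      (raneyPoly p (n + 1)).comp (C r + X)
    have hq : ∀ x, q.eval x = ∑ ij ∈ antidiagonal (n + 1), raney p ij.1 r * raney p ij.2 x -
        raney p (n + 1) (r + x) := fun x => by
      simp [q, raney, eval_finsetSum]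
    have hper : Function.Periodic q.eval 1 := fun x => by
      show q.eval (x + 1) = q.eval x
      rw [hq, hq, Nat.sum_antidiagonal_succ', Nat.sum_antidiagonal_succ']
      have hsum : ∑ ij ∈ antidiagonal n, raney p ij.1 r * raney p (ij.2 + 1) (x + 1) =
          ∑ ij ∈ antidiagonal n, raney p ij.1 r * raney p (ij.2 + 1) x +
            raney p n (r + (x + p)) := by
        rw [← ih, ← sum_add_distrib]
        refine sum_congr rfl fun ij _ => ?_
        rw [← raney_succ_add_one_sub]
        ring
      have hlast : raney p (n + 1) (r + (x + 1)) =
          raney p (n + 1) (r + x) + raney p n (r + (x + p)) := by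
        rw [← add_assoc, ← add_assoc, ← raney_succ_add_one_sub]
        ring
      simp only [hsum, hlast, raney_zero]
      ring
    have h0 : q.eval 0 = 0 := by
      simp [hq, Nat.sum_antidiagonal_succ']
    have := congrArg (eval s) (Polynomial.eq_C_of_periodic hper)
    rwa [h0, eval_C, hq, sub_eq_zero] at this

theorem raney_pos {p x : ℝ} (hp : 1 ≤ p) (hx : 0 < x) (n : ℕ) : 0 < raney p n x := by
  rcases n with _ | n
  · simp
  rw [raney_succ]
  have : 0 ≤ (p - 1) * (n + 1) := mul_nonneg (by linarith) (by positivity)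
  exact div_pos (mul_pos hx (prod_pos fun i _ => by positivity)) (by positivity)

theorem factorial_mul_raney_mul_Gamma {p x : ℝ} (hp : 1 ≤ p) (hx : 0 < x) (n : ℕ) :
    n.factorial * raney p n x * Real.Gamma (x + (p - 1) * n + 1) = x * Real.Gamma (x + p * n) := by
  rcases n with _ | n
  · simp [Real.Gamma_add_one hx.ne']
  have hy : 0 < x + (p - 1) * (n + 1 : ℕ) + 1 := by
    have : 0 ≤ (p - 1) * (n + 1 : ℕ) := mul_nonneg (by linarith) (by positivity)
    linarith
  have hpn : x + p * (n + 1 : ℕ) = x + (p - 1) * (n + 1 : ℕ) + 1 + n := by push_cast; ring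
  rw [hpn, Real.Gamma_add_nat_eq_mul_prod hy, raney_succ]
  push_cast
  field_simp

theorem Gamma_div_Gamma_eq_factorial_mul_raney (n : ℕ) :
    Real.Gamma (3 * ((n + 1 : ℕ) : ℝ) / 2 - 1) / Real.Gamma (((n + 1 : ℕ) : ℝ) / 2) =
      (n + 1).factorial * raney (3 / 2) n (1 / 2) := by
  have h := factorial_mul_raney_mul_Gamma (p := 3 / 2) (x := 1 / 2) (by norm_num) (by norm_num) n
  have hpos : 0 < ((n + 1 : ℕ) : ℝ) / 2 := by positivity
  rw [show (1 / 2 : ℝ) + (3 / 2 - 1) * n + 1 = ((n + 1 : ℕ) : ℝ) / 2 + 1 by push_cast; ring,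
    Real.Gamma_add_one hpos.ne'] at h
  rw [div_eq_iff (Real.Gamma_pos_of_pos hpos).ne', Nat.factorial_succ]
  push_cast at h ⊢
  rw [show 3 * ((n : ℝ) + 1) / 2 - 1 = 1 / 2 + 3 / 2 * n by ring]
  linear_combination (-2 : ℝ) * h

theorem raney_three_halves_add_two_mul (n : ℕ) :
    raney (3 / 2) (n + 2) (1 / 2) * (4 * (n + 1) * (n + 2) * (n + 3)) =
      raney (3 / 2) n (1 / 2) * ((3 * n + 1) * (3 * n + 3) * (3 * n + 5)) := by
  have h₀ := factorial_mul_raney_mul_Gamma (p := 3 / 2) (x := 1 / 2) (by norm_num) (by norm_num) n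
  have h₂ := factorial_mul_raney_mul_Gamma (p := 3 / 2) (x := 1 / 2) (by norm_num) (by norm_num)
    (n + 2)
  set g := Real.Gamma (1 / 2 + (3 / 2 - 1) * n + 1)
  have hg : 0 < g := Real.Gamma_pos_of_pos (by positivity)
  have e₁ : Real.Gamma (1 / 2 + (3 / 2 - 1) * ((n + 2 : ℕ) : ℝ) + 1) = (n / 2 + 3 / 2) * g := by
    rw [show (1 / 2 : ℝ) + (3 / 2 - 1) * ((n + 2 : ℕ) : ℝ) + 1 =
      (1 / 2 + (3 / 2 - 1) * n + 1) + 1 by push_cast; ring, Real.Gamma_add_one (by positivity)]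
    ring
  have e₂ : Real.Gamma (1 / 2 + 3 / 2 * ((n + 2 : ℕ) : ℝ)) =
      (3 * n / 2 + 5 / 2) * ((3 * n / 2 + 3 / 2) *
        ((3 * n / 2 + 1 / 2) * Real.Gamma (1 / 2 + 3 / 2 * n))) := by
    rw [show (1 / 2 : ℝ) + 3 / 2 * ((n + 2 : ℕ) : ℝ) = 1 / 2 + 3 / 2 * n + 1 + 1 + 1 by
      push_cast; ring, Real.Gamma_add_one (by positivity), Real.Gamma_add_one (by positivity),
      Real.Gamma_add_one (by positivity)]
    ring
  rw [e₁, e₂, Nat.factorial_succ, Nat.factorial_succ] at h₂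
  push_cast at h₂
  refine mul_right_cancel₀ (mul_pos (Nat.cast_pos.2 n.factorial_pos) hg).ne' ?_
  linear_combination 8 * h₂ - (3 * n + 1) * (3 * n + 3) * (3 * n + 5) * h₀

theorem raney_three_halves_add_two_le (n : ℕ) :
    raney (3 / 2) (n + 2) (1 / 2) ≤ 27 / 4 * raney (3 / 2) n (1 / 2) := by
  have hc := raney_pos (p := 3 / 2) (x := 1 / 2) (by norm_num) (by norm_num) n
  have hd : (0 : ℝ) < 4 * (n + 1) * (n + 2) * (n + 3) := by positivity
  refine le_of_mul_le_mul_right ?_ hd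
  rw [raney_three_halves_add_two_mul]
  nlinarith [mul_nonneg hc.le (sq_nonneg (n : ℝ)), mul_nonneg hc.le (Nat.cast_nonneg' n)]

theorem summable_raney_three_halves_mul_pow {ρ : ℝ} (hρ₀ : 0 ≤ ρ) (hρ : 27 * ρ ^ 2 < 4) :
    Summable fun n => raney (3 / 2) n (1 / 2) * ρ ^ n := by
  set f := fun n => raney (3 / 2) n (1 / 2) * ρ ^ n
  have hf : ∀ n, ‖f n‖ = f n := fun n =>
    Real.norm_of_nonneg (mul_nonneg (raney_pos (by norm_num) (by norm_num) n).le (by positivity))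
  have hstep : ∀ n, ‖f (n + 2)‖ ≤ 27 * ρ ^ 2 / 4 * ‖f n‖ := fun n => by
    rw [hf, hf]
    calc f (n + 2) ≤ 27 / 4 * raney (3 / 2) n (1 / 2) * ρ ^ (n + 2) :=
          mul_le_mul_of_nonneg_right (raney_three_halves_add_two_le n) (by positivity)
      _ = 27 * ρ ^ 2 / 4 * f n := by ring
  have hq : 27 * ρ ^ 2 / 4 < 1 := by linarith
  exact Summable.even_add_odd
    (summable_of_ratio_norm_eventually_le hq (Eventually.of_forall fun m => hstep (2 * m)))
    (summable_of_ratio_norm_eventually_le hq (Eventually.of_forall fun m => hstep (2 * m + 1)))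

noncomputable def raneySeries (p r : ℝ) (z : ℂ) : ℂ := ∑' n, (raney p n r : ℂ) * z ^ n

theorem sum_antidiagonal_raney_mul_pow (p r s : ℝ) (z : ℂ) (n : ℕ) :
    ∑ ij ∈ antidiagonal n, (raney p ij.1 r : ℂ) * z ^ ij.1 * ((raney p ij.2 s : ℂ) * z ^ ij.2) =
      (raney p n (r + s) : ℂ) * z ^ n := by
  calc _ = ∑ ij ∈ antidiagonal n, ((raney p ij.1 r * raney p ij.2 s : ℝ) : ℂ) * z ^ n :=
        sum_congr rfl fun ij hij => by
          rw [← mem_antidiagonal.1 hij, pow_add]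
          push_cast
          ring
    _ = _ := by rw [← sum_mul, ← ofReal_sum, sum_antidiagonal_raney_mul]

section RaneySeries

variable {p r s : ℝ} {z : ℂ}

theorem summable_norm_raney_add (hr : Summable fun n => ‖(raney p n r : ℂ) * z ^ n‖)
    (hs : Summable fun n => ‖(raney p n s : ℂ) * z ^ n‖) :
    Summable fun n => ‖(raney p n (r + s) : ℂ) * z ^ n‖ := by
  simpa only [sum_antidiagonal_raney_mul_pow] using
    summable_norm_sum_mul_antidiagonal_of_summable_norm hr hs

theorem raneySeries_mul (hr : Summable fun n => ‖(raney p n r : ℂ) * z ^ n‖)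
    (hs : Summable fun n => ‖(raney p n s : ℂ) * z ^ n‖) :
    raneySeries p r z * raneySeries p s z = raneySeries p (r + s) z := by
  unfold raneySeries
  simpa only [sum_antidiagonal_raney_mul_pow] using
    tsum_mul_tsum_eq_tsum_sum_antidiagonal_of_summable_norm hr hs

theorem raneySeries_one (h : Summable fun n => (raney p n p : ℂ) * z ^ n) :
    raneySeries p 1 z = 1 + z * raneySeries p p z := by
  have hshift : ∀ n, (raney p (n + 1) 1 : ℂ) * z ^ (n + 1) = z * ((raney p n p : ℂ) * z ^ n) :=
    fun n => by rw [raney_succ_one, pow_succ]; ring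
  rw [raneySeries, tsum_eq_zero_add' (by simpa only [hshift] using h.mul_left z)]
  simp only [hshift, tsum_mul_left, raney_zero]
  simp [raneySeries]

end RaneySeries

theorem summable_norm_raney_three_halves_half {z : ℂ} (hz : 27 * ‖z‖ ^ 2 < 4) :
    Summable fun n => ‖(raney (3 / 2) n (1 / 2) : ℂ) * z ^ n‖ := by
  have hnorm : ∀ n, ‖(raney (3 / 2) n (1 / 2) : ℂ) * z ^ n‖ = raney (3 / 2) n (1 / 2) * ‖z‖ ^ n :=
    fun n => by
      rw [norm_mul, norm_pow, Complex.norm_real,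
        Real.norm_of_nonneg (raney_pos (by norm_num) (by norm_num) n).le]
  simpa only [hnorm] using summable_raney_three_halves_mul_pow (norm_nonneg z) hz

theorem raneySeries_three_halves_half_sq {z : ℂ} (hz : 27 * ‖z‖ ^ 2 < 4) :
    raneySeries (3 / 2) (1 / 2) z ^ 2 = 1 + z * raneySeries (3 / 2) (1 / 2) z ^ 3 := by
  have h₁ := summable_norm_raney_three_halves_half hz
  have h₂ := summable_norm_raney_add h₁ h₁
  have h₃ := summable_norm_raney_add h₂ h₁
  norm_num only at h₂ h₃
  have hsq : raneySeries (3 / 2) (1 / 2) z ^ 2 = raneySeries (3 / 2) 1 z := by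
    rw [sq, raneySeries_mul h₁ h₁]
    norm_num
  have hcube : raneySeries (3 / 2) (1 / 2) z ^ 3 = raneySeries (3 / 2) (3 / 2) z := by
    rw [pow_succ, hsq, raneySeries_mul h₂ h₁]
    norm_num
  rw [hsq, hcube, raneySeries_one h₃.of_norm]

theorem saddleTerm_succ (φ t : ℝ) (n : ℕ) :
    saddleTerm φ (n + 1) t = I * t * exp (-(I * φ / 4)) *
      ((raney (3 / 2) n (1 / 2) : ℂ) * (I * t * exp (-(I * φ / 4)) ^ 3 / 3) ^ n) := by
  have hexp : exp (I * φ * (1 / 2 - 3 * ((n + 1 : ℕ) : ℂ) / 4)) =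
      exp (-(I * φ / 4)) * (exp (-(I * φ / 4)) ^ 3) ^ n := by
    rw [← pow_mul, ← exp_nat_mul, ← exp_add]
    congr 1
    push_cast
    ring
  have hthree : (3 : ℂ) ^ (1 - ((n + 1 : ℕ) : ℤ)) = ((3 : ℂ) ^ n)⁻¹ := by
    rw [show 1 - ((n + 1 : ℕ) : ℤ) = -(n : ℤ) by push_cast; ring, zpow_neg, zpow_natCast]
  have hfac : ((n + 1).factorial : ℂ) ≠ 0 := Nat.cast_ne_zero.2 (Nat.factorial_ne_zero _)
  rw [saddleTerm, Gamma_div_Gamma_eq_factorial_mul_raney, hexp, hthree, div_pow]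
  push_cast
  field_simp
  ring

theorem norm_saddleTerm_succ (φ t : ℝ) (n : ℕ) :
    ‖saddleTerm φ (n + 1) t‖ = |t| * (raney (3 / 2) n (1 / 2) * (|t| / 3) ^ n) := by
  have hexp : ‖exp (-(I * φ / 4))‖ = 1 := by simp [Complex.norm_exp]
  rw [saddleTerm_succ]
  simp only [norm_mul, norm_div, norm_pow, norm_I, Complex.norm_real, hexp, Real.norm_eq_abs,
    abs_of_pos (raney_pos (p := 3 / 2) (x := 1 / 2) (by norm_num) (by norm_num) n)]
  norm_num

theorem mul_sq_abs_div_three_lt_four {t : ℝ} (ht : |t| < 2 / √3) : 27 * (|t| / 3) ^ 2 < 4 := by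
  have h : |t| * √3 < 2 := (lt_div_iff₀ (by positivity)).1 ht
  nlinarith [mul_self_lt_mul_self (by positivity) h, Real.sq_sqrt (show (0 : ℝ) ≤ 3 by norm_num)]

theorem summable_norm_saddleTerm (φ : ℝ) {t : ℝ} (ht : |t| < 2 / √3) :
    Summable fun n => ‖saddleTerm φ (n + 1) t‖ := by
  simp only [norm_saddleTerm_succ]
  exact (summable_raney_three_halves_mul_pow (by positivity)
    (mul_sq_abs_div_three_lt_four ht)).mul_left |t|

theorem norm_saddleTerm_succ_le_of_abs_le (φ : ℝ) {t t' : ℝ} (h : |t| ≤ |t'|) (n : ℕ) :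
    ‖saddleTerm φ (n + 1) t‖ ≤ ‖saddleTerm φ (n + 1) t'‖ := by
  have hc := (raney_pos (p := 3 / 2) (x := 1 / 2) (by norm_num) (by norm_num) n).le
  rw [norm_saddleTerm_succ, norm_saddleTerm_succ]
  gcongr

theorem tendstoUniformlyOn_saddleTerm (φ : ℝ) {r : ℝ} (hr : r < 2 / √3) :
    TendstoUniformlyOn (fun N t => ∑ n ∈ range N, saddleTerm φ (n + 1) t)
      (fun t => ∑' n, saddleTerm φ (n + 1) t) atTop {t | |t| ≤ r} := by
  have hR : |max r 0| < 2 / √3 := by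
    rw [abs_of_nonneg (le_max_right r 0)]
    exact max_lt hr (by positivity)
  refine tendstoUniformlyOn_tsum_nat (summable_norm_saddleTerm φ hR) fun n t ht => ?_
  refine norm_saddleTerm_succ_le_of_abs_le φ ?_ n
  rw [abs_of_nonneg (le_max_right r 0)]
  exact ht.trans (le_max_left r 0)

theorem saddleTerm_cubic (φ : ℝ) {s : ℝ} (hs : |s| < 2 / √3) :
    exp (I * φ) * (-exp (I * φ / 2) + ∑' n : ℕ, saddleTerm φ (n + 1) s) -
        (-exp (I * φ / 2) + ∑' n : ℕ, saddleTerm φ (n + 1) s) ^ 3 / 3 =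
      -(2 / 3) * exp (I * (3 * φ) / 2) - (s : ℂ) ^ 2 := by
  set u := exp (I * φ / 4)
  set v := exp (-(I * φ / 4))
  have huv : u * v = 1 := by rw [← exp_add, add_neg_cancel, exp_zero]
  set z := I * s * v ^ 3 / 3
  have hz : 27 * ‖z‖ ^ 2 < 4 := by
    have hv : ‖v‖ = 1 := by simp [v, Complex.norm_exp]
    simpa [z, hv] using mul_sq_abs_div_three_lt_four hs
  have hS : ∑' n, saddleTerm φ (n + 1) s = I * s * v * raneySeries (3 / 2) (1 / 2) z := by
    simp only [saddleTerm_succ, tsum_mul_left]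
    rfl
  have hu : ∀ k : ℕ, exp (k * (I * φ / 4)) = u ^ k := fun k => by rw [exp_nat_mul]
  have hw : exp (I * φ) = u ^ 4 := by rw [← hu]; congr 1; push_cast; ring
  have hw₂ : exp (I * φ / 2) = u ^ 2 := by rw [← hu]; congr 1; push_cast; ring
  have hw₃ : exp (I * (3 * φ) / 2) = u ^ 6 := by rw [← hu]; congr 1; push_cast; ring
  rw [hS, hw, hw₂, hw₃]
  set σ := raneySeries (3 / 2) (1 / 2) z
  -- with `α = -u² + i s v σ`: `w α - α³/3 + (2/3) u⁶ + s² = -s² (σ² - 1 - z σ³)` once `u v = 1`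
  linear_combination (-(s : ℂ) ^ 2) * raneySeries_three_halves_half_sq hz +
    ((u * s * v * σ) ^ 2 - I * s ^ 3 * v ^ 3 * σ ^ 3 / 3) * I_sq - (s * σ) ^ 2 * (u * v + 1) * huv

theorem stmt0_general (φ : ℝ)
    (s : ℝ) (hs : |s| < 2 / Real.sqrt 3) :
    (Summable fun n : ℕ => ‖saddleTerm φ (n + 1) s‖) ∧
    (∀ r : ℝ, r < 2 / Real.sqrt 3 →
      TendstoUniformlyOn
        (fun N : ℕ => fun t : ℝ => ∑ n ∈ Finset.range N, saddleTerm φ (n + 1) t)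
        (fun t : ℝ => ∑' n : ℕ, saddleTerm φ (n + 1) t) atTop
        {t : ℝ | |t| ≤ r}) ∧
    (Complex.exp (Complex.I * φ) *
          (-Complex.exp (Complex.I * φ / 2) + ∑' n : ℕ, saddleTerm φ (n + 1) s) -
        (-Complex.exp (Complex.I * φ / 2) + ∑' n : ℕ, saddleTerm φ (n + 1) s) ^ 3 / 3 =
      -(2 / 3) * Complex.exp (Complex.I * (3 * φ) / 2) - (s : ℂ) ^ 2) :=
  ⟨summable_norm_saddleTerm φ hs, fun _ hr => tendstoUniformlyOn_saddleTerm φ hr,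
    saddleTerm_cubic φ hs⟩

theorem stmt0 (φ : ℝ) (hφ : φ ∈ Set.Ioc (-Real.pi) Real.pi)
    (s : ℝ) (hs : |s| < 2 / Real.sqrt 3) :
    (Summable fun n : ℕ => ‖saddleTerm φ (n + 1) s‖) ∧
    (∀ r : ℝ, r < 2 / Real.sqrt 3 →
      TendstoUniformlyOn
        (fun N : ℕ => fun t : ℝ => ∑ n ∈ Finset.range N, saddleTerm φ (n + 1) t)
        (fun t : ℝ => ∑' n : ℕ, saddleTerm φ (n + 1) t) atTop
        {t : ℝ | |t| ≤ r}) ∧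
    (Complex.exp (Complex.I * φ) *
          (-Complex.exp (Complex.I * φ / 2) + ∑' n : ℕ, saddleTerm φ (n + 1) s) -
        (-Complex.exp (Complex.I * φ / 2) + ∑' n : ℕ, saddleTerm φ (n + 1) s) ^ 3 / 3 =
      -(2 / 3) * Complex.exp (Complex.I * (3 * φ) / 2) - (s : ℂ) ^ 2) :=
  stmt0_general φ s hs
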